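/- arXiv:1311.4227 — 2 statements merged into one kernel-verified Lean document; each statement's English description precedes it below -/
import Mathlib

section
/- (Convergence of the subgradient price-update with stepsize 1/(k+1).) Let E be a finite-dimensional real inner product space, g : E → ℝ a convex function attaining its minimum at some point λ* ∈ E, and G ≥ 0. Let (λ_k)_{k≥0} be a sequence in E and (g_k)_{k≥0} a sequence of subgradients, i.e. for every k and every y ∈ E, g(y) ≥ g(λ_k) + ⟪g_k, y − λ_k⟫ and ‖g_k‖ ≤ G, with updates λ_{k+1} = λ_k − (1/(k+1)) g_k. Then the best objective value found converges to the minimum: lim_{n→∞} min_{0≤k≤n} g(λ_k) = g(λ*); equivalently inf_{k≥0} g(λ_k) = g(λ*). -/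
/-!
Expanding `‖λ_{k+1} - λ*‖²` and using the subgradient inequality at `λ*` gives
`‖λ_{k+1} - λ*‖² + 2 α_k (g(λ_k) - g(λ*)) ≤ ‖λ_k - λ*‖² + α_k² G²`.
Telescoping, the weighted gaps `∑_{k ≤ n} α_k (g(λ_k) - g(λ*))` stay bounded by
`(‖λ_0 - λ*‖² + G² ∑ α_k²) / 2`. This sum dominates the best gap times `∑_{k ≤ n} α_k`,
which diverges, so the best gap tends to zero.
-/

open Finset Filter Topology
open scoped RealInnerProductSpace

section SubgradientMethod

variable {E : Type*} [NormedAddCommGroup E] [InnerProductSpace ℝ E]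

theorem norm_sub_sq_add_two_mul_gap_le {f : E → ℝ} {x v xstar : E} {a G : ℝ} (ha : 0 ≤ a)
    (hsub : f x + ⟪v, xstar - x⟫ ≤ f xstar) (hv : ‖v‖ ≤ G) :
    ‖x - a • v - xstar‖ ^ 2 + 2 * a * (f x - f xstar) ≤ ‖x - xstar‖ ^ 2 + a ^ 2 * G ^ 2 := by
  have hexpand : ‖x - a • v - xstar‖ ^ 2 =
      ‖x - xstar‖ ^ 2 - 2 * (a * ⟪x - xstar, v⟫) + a ^ 2 * ‖v‖ ^ 2 := by
    rw [sub_right_comm, norm_sub_sq_real, real_inner_smul_right, norm_smul, mul_pow,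
      Real.norm_eq_abs, sq_abs]
  have hgap : f x - f xstar ≤ ⟪x - xstar, v⟫ := by
    rw [← neg_sub xstar x, inner_neg_left, real_inner_comm]
    linarith
  have hv2 : ‖v‖ ^ 2 ≤ G ^ 2 := pow_le_pow_left₀ (norm_nonneg v) hv 2
  rw [hexpand]
  nlinarith [mul_le_mul_of_nonneg_left hgap ha, mul_le_mul_of_nonneg_left hv2 (sq_nonneg a)]

variable {f : E → ℝ} {x v : ℕ → E} {α : ℕ → ℝ} {xstar : E} {G : ℝ}

theorem two_mul_sum_gap_le (hα : ∀ k, 0 ≤ α k)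
    (hsub : ∀ k, f (x k) + ⟪v k, xstar - x k⟫ ≤ f xstar) (hv : ∀ k, ‖v k‖ ≤ G)
    (hx : ∀ k, x (k + 1) = x k - α k • v k) (n : ℕ) :
    2 * ∑ k ∈ range n, α k * (f (x k) - f xstar) ≤
      ‖x 0 - xstar‖ ^ 2 + G ^ 2 * ∑ k ∈ range n, α k ^ 2 := by
  suffices h : ‖x n - xstar‖ ^ 2 + 2 * ∑ k ∈ range n, α k * (f (x k) - f xstar) ≤
      ‖x 0 - xstar‖ ^ 2 + G ^ 2 * ∑ k ∈ range n, α k ^ 2 by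
    nlinarith [sq_nonneg ‖x n - xstar‖]
  induction n with
  | zero => simp
  | succ n ih =>
    have hstep := norm_sub_sq_add_two_mul_gap_le (hα n) (hsub n) (hv n)
    rw [← hx n] at hstep
    rw [sum_range_succ, sum_range_succ]
    linarith

theorem tendsto_inf'_of_subgradient_method (hα : ∀ k, 0 ≤ α k)
    (hα_sq : Summable fun k => α k ^ 2)
    (hα_sum : Tendsto (fun n => ∑ k ∈ range n, α k) atTop atTop)
    (hmin : ∀ k, f xstar ≤ f (x k))
    (hsub : ∀ k, f (x k) + ⟪v k, xstar - x k⟫ ≤ f xstar) (hv : ∀ k, ‖v k‖ ≤ G)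
    (hx : ∀ k, x (k + 1) = x k - α k • v k) :
    Tendsto (fun n => (range (n + 1)).inf' nonempty_range_add_one fun k => f (x k))
      atTop (𝓝 (f xstar)) := by
  set best := fun n => (range (n + 1)).inf' nonempty_range_add_one fun k => f (x k)
  set C := (‖x 0 - xstar‖ ^ 2 + G ^ 2 * ∑' k, α k ^ 2) / 2 with hC
  have hweighted (n : ℕ) : (best n - f xstar) * ∑ k ∈ range (n + 1), α k ≤ C := calc
    (best n - f xstar) * ∑ k ∈ range (n + 1), α k
      = ∑ k ∈ range (n + 1), α k * (best n - f xstar) := by rw [mul_sum]; simp only [mul_comm]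
    _ ≤ ∑ k ∈ range (n + 1), α k * (f (x k) - f xstar) := by
      gcongr with k hk
      · exact hα k
      · exact inf'_le _ hk
    _ ≤ C := by
      have hpartial := two_mul_sum_gap_le hα hsub hv hx (n + 1)
      have htail : G ^ 2 * ∑ k ∈ range (n + 1), α k ^ 2 ≤ G ^ 2 * ∑' k, α k ^ 2 := by
        gcongr
        exact hα_sq.sum_le_tsum _ fun k _ => sq_nonneg (α k)
      linarith
  have hH : Tendsto (fun n => ∑ k ∈ range (n + 1), α k) atTop atTop :=
    hα_sum.comp (tendsto_add_atTop_nat 1)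
  have hupper : ∀ᶠ n in atTop, best n ≤ f xstar + C / ∑ k ∈ range (n + 1), α k := by
    filter_upwards [hH.eventually_gt_atTop 0] with n hn
    rw [← sub_le_iff_le_add', le_div_iff₀ hn]
    exact hweighted n
  have hlower (n : ℕ) : f xstar ≤ best n := le_inf' _ _ fun k _ => hmin k
  have hlim : Tendsto (fun n => f xstar + C / ∑ k ∈ range (n + 1), α k) atTop (𝓝 (f xstar)) := by
    simpa using tendsto_const_nhds.add (tendsto_const_nhds.div_atTop hH)
  exact tendsto_of_tendsto_of_tendsto_of_le_of_le' tendsto_const_nhds hlim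
    (Eventually.of_forall hlower) hupper

end SubgradientMethod

theorem subgradient_method_converges_general
    {E : Type} [NormedAddCommGroup E] [InnerProductSpace ℝ E]
    (g : E → ℝ)
    (lamstar : E) (hmin : ∀ y, g lamstar ≤ g y)
    (G : ℝ)
    (lam gs : ℕ → E)
    (hsubgrad : ∀ (k : ℕ) (y : E),
      g y ≥ g (lam k) + (inner ℝ (gs k) (y - lam k) : ℝ))
    (hbound : ∀ k, ‖gs k‖ ≤ G)
    (hupdate : ∀ k, lam (k + 1) = lam k - (1 / ((k : ℝ) + 1)) • gs k) :
    Filter.Tendsto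
      (fun n => (Finset.range (n + 1)).inf' Finset.nonempty_range_add_one
        (fun k => g (lam k)))
      Filter.atTop (nhds (g lamstar)) := by
  have hα_sq : Summable fun k : ℕ => (1 / ((k : ℝ) + 1)) ^ 2 := by
    simpa [one_div, inv_pow] using
      (summable_nat_add_iff 1).mpr (Real.summable_nat_pow_inv.mpr one_lt_two)
  exact tendsto_inf'_of_subgradient_method (fun k => by positivity) hα_sq
    Real.tendsto_sum_range_one_div_nat_succ_atTop (fun k => hmin _) (fun k => hsubgrad k lamstar)
    hbound hupdate

/-- **Convergence of the subgradient price-update with stepsize `1/(k+1)`.**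
Let `E` be a finite-dimensional real inner product space, `g : E → ℝ` a convex
function attaining its minimum at `lamstar`, and `G ≥ 0`. If `gs k` is a
subgradient of `g` at `lam k` with `‖gs k‖ ≤ G` and
`lam (k+1) = lam k - (1/(k+1)) • gs k`, then the best objective value found so
far converges to the minimum: `min_{0 ≤ k ≤ n} g (lam k) → g lamstar`. -/
theorem subgradient_method_converges
    {E : Type} [NormedAddCommGroup E] [InnerProductSpace ℝ E]
    [FiniteDimensional ℝ E]
    (g : E → ℝ) (hg : ConvexOn ℝ Set.univ g)
    (lamstar : E) (hmin : ∀ y, g lamstar ≤ g y)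
    (G : ℝ) (hG : 0 ≤ G)
    (lam gs : ℕ → E)
    (hsubgrad : ∀ (k : ℕ) (y : E),
      g y ≥ g (lam k) + (inner ℝ (gs k) (y - lam k) : ℝ))
    (hbound : ∀ k, ‖gs k‖ ≤ G)
    (hupdate : ∀ k, lam (k + 1) = lam k - (1 / ((k : ℝ) + 1)) • gs k) :
    Filter.Tendsto
      (fun n => (Finset.range (n + 1)).inf' Finset.nonempty_range_add_one
        (fun k => g (lam k)))
      Filter.atTop (nhds (g lamstar)) :=
  subgradient_method_converges_general g lamstar hmin G lam gs hsubgrad hbound hupdate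
end

section
/- (Optimality of foresighted policies under state-dependent prices with complementary slackness: no duality gap.) For a finite discounted MDP with resource-usage function f(s,a), let λ : S → ℝ satisfy λ(s) ≥ 0 for all s, and let V^λ : S → ℝ satisfy the penalized Bellman equation V^λ(s) = max_{a∈A(s)} [(1−δ)(u(s,a) − λ(s) f(s,a)) + δ ∑_{s'} p(s'|s,a) V^λ(s')]. Suppose the stationary policy π* satisfies: (i) π*(s) attains the maximum defining V^λ(s) at every state s; (ii) feasibility, f(s,π*(s)) ≤ 0 for all s; and (iii) complementary slackness, λ(s) f(s,π*(s)) = 0 for all s. Then the unpenalized policy value of π* equals the penalized optimal value, V_{π*}(s) = V^λ(s) for all s, and π* is optimal among feasible stationary policies: for every stationary policy π with f(s,π(s)) ≤ 0 for all s, V_{π*}(s) ≥ V_π(s) for every state s. -/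
/-!
With complementary slackness the penalty vanishes along `πstar`, so `Vlam` and the value of
`πstar` are fixed points of the same discounted evaluation operator, which has only one. For a
feasible `π` the penalty `lam s * f s (π s)` is nonpositive, so the penalized Bellman equation
makes `Vlam` a supersolution of the evaluation equation of `π`; the comparison principle for
discounted stochastic operators then gives `Vπ ≤ Vlam`.
-/

open Finset Function

section EvalOperator

variable {S : Type} [Fintype S]

def evalOperator (δ : ℝ) (r : S → ℝ) (q : S → S → ℝ) (V : S → ℝ) : S → ℝ :=
  fun s => r s + δ * ∑ s', q s s' * V s'

lemma sum_mul_le_of_le {q g : S → ℝ} {M : ℝ} (hq0 : ∀ s, 0 ≤ q s) (hq1 : ∑ s, q s = 1)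
    (hg : ∀ s, g s ≤ M) : ∑ s, q s * g s ≤ M :=
  calc ∑ s, q s * g s ≤ ∑ s, q s * M :=
        sum_le_sum fun s _ => mul_le_mul_of_nonneg_left (hg s) (hq0 s)
    _ = M := by rw [← sum_mul, hq1, one_mul]

variable {δ : ℝ} {r : S → ℝ} {q : S → S → ℝ}

lemma le_of_le_evalOperator_of_evalOperator_le (hδ0 : 0 ≤ δ) (hδ1 : δ < 1)
    (hq0 : ∀ s s', 0 ≤ q s s') (hq1 : ∀ s, ∑ s', q s s' = 1) {V W : S → ℝ}
    (hV : V ≤ evalOperator δ r q V) (hW : evalOperator δ r q W ≤ W) : V ≤ W := by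
  intro s
  have : Nonempty S := ⟨s⟩
  obtain ⟨s₀, hs₀⟩ := Finite.exists_max fun s => V s - W s
  have hstep : V s₀ - W s₀ ≤ δ * ∑ s', q s₀ s' * (V s' - W s') := by
    have hVs := hV s₀
    have hWs := hW s₀
    simp only [evalOperator, mul_sub, sum_sub_distrib] at hVs hWs ⊢
    linarith
  have hmean : ∑ s', q s₀ s' * (V s' - W s') ≤ V s₀ - W s₀ :=
    sum_mul_le_of_le (hq0 s₀) (hq1 s₀) hs₀
  have hmax : V s₀ - W s₀ ≤ 0 := by nlinarith [mul_le_mul_of_nonneg_left hmean hδ0]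
  linarith [hs₀ s]

lemma eq_of_isFixedPt_evalOperator (hδ0 : 0 ≤ δ) (hδ1 : δ < 1)
    (hq0 : ∀ s s', 0 ≤ q s s') (hq1 : ∀ s, ∑ s', q s s' = 1) {V W : S → ℝ}
    (hV : IsFixedPt (evalOperator δ r q) V) (hW : IsFixedPt (evalOperator δ r q) W) : V = W :=
  le_antisymm
    (le_of_le_evalOperator_of_evalOperator_le hδ0 hδ1 hq0 hq1 hV.symm.le hW.le)
    (le_of_le_evalOperator_of_evalOperator_le hδ0 hδ1 hq0 hq1 hW.symm.le hV.le)

end EvalOperator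

theorem no_duality_gap_state_dependent_prices_general
    {S A : Type} [Fintype S]
    (Act : S → Finset A) (hAct : ∀ s, (Act s).Nonempty)
    (u f : S → A → ℝ) (p : S → A → S → ℝ)
    (hp0 : ∀ s a, a ∈ Act s → ∀ s', 0 ≤ p s a s')
    (hp1 : ∀ s a, a ∈ Act s → ∑ s', p s a s' = 1)
    (δ : ℝ) (hδ0 : 0 ≤ δ) (hδ1 : δ < 1)
    (lam : S → ℝ) (hlam : ∀ s, 0 ≤ lam s)
    (Vlam : S → ℝ)
    (hVlam : ∀ s, Vlam s = (Act s).sup' (hAct s)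
      (fun a => (1 - δ) * (u s a - lam s * f s a)
        + δ * ∑ s', p s a s' * Vlam s'))
    (πstar : S → A) (hπstar : ∀ s, πstar s ∈ Act s)
    (hGreedy : ∀ s, Vlam s
      = (1 - δ) * (u s (πstar s) - lam s * f s (πstar s))
        + δ * ∑ s', p s (πstar s) s' * Vlam s')
    (hslack : ∀ s, lam s * f s (πstar s) = 0)
    (Vπstar : S → ℝ)
    (hVπstar : ∀ s, Vπstar s
      = (1 - δ) * u s (πstar s) + δ * ∑ s', p s (πstar s) s' * Vπstar s') :
    (∀ s, Vπstar s = Vlam s) ∧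
      (∀ (π : S → A), (∀ s, π s ∈ Act s) → (∀ s, f s (π s) ≤ 0) →
        ∀ (Vπ : S → ℝ),
          (∀ s, Vπ s = (1 - δ) * u s (π s) + δ * ∑ s', p s (π s) s' * Vπ s') →
          ∀ s, Vπ s ≤ Vπstar s) := by
  have hVlam_fixed : IsFixedPt (evalOperator δ (fun s => (1 - δ) * u s (πstar s))
      fun s => p s (πstar s)) Vlam :=
    funext fun s => by simp only [evalOperator, hGreedy s, hslack s, sub_zero]
  have hvalue : Vπstar = Vlam :=
    eq_of_isFixedPt_evalOperator hδ0 hδ1 (fun s => hp0 s _ (hπstar s))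
      (fun s => hp1 s _ (hπstar s)) (funext fun s => (hVπstar s).symm) hVlam_fixed
  refine ⟨congrFun hvalue, fun π hπ hfπ Vπ hVπ => ?_⟩
  have hVlam_super : evalOperator δ (fun s => (1 - δ) * u s (π s)) (fun s => p s (π s)) Vlam
      ≤ Vlam := fun s => by
    have hpenalty : (1 - δ) * (lam s * f s (π s)) ≤ 0 :=
      mul_nonpos_of_nonneg_of_nonpos (by linarith)
        (mul_nonpos_of_nonneg_of_nonpos (hlam s) (hfπ s))
    have hmax := (hVlam s).symm ▸ le_sup' (fun a => (1 - δ) * (u s a - lam s * f s a)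
      + δ * ∑ s', p s a s' * Vlam s') (hπ s)
    simp only [evalOperator] at hmax ⊢
    linarith
  rw [hvalue]
  exact le_of_le_evalOperator_of_evalOperator_le hδ0 hδ1 (fun s => hp0 s _ (hπ s))
    (fun s => hp1 s _ (hπ s)) (fun s => (hVπ s).le) hVlam_super

/-- **Optimality of foresighted policies under state-dependent prices with
complementary slackness: no duality gap.**
Suppose `Vlam` satisfies the Bellman equation of the MDP penalized with the
nonnegative state-dependent prices `lam`, and the stationary policy `πstar`
(i) attains the maximum defining `Vlam s` at every `s`, (ii) is feasible
(`f s (πstar s) ≤ 0`), and (iii) satisfies complementary slackness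
(`lam s * f s (πstar s) = 0`). Then the unpenalized policy value of `πstar`
equals `Vlam`, and `πstar` dominates every feasible stationary policy. -/
theorem no_duality_gap_state_dependent_prices
    {S A : Type} [Fintype S] [Nonempty S] [Fintype A]
    (Act : S → Finset A) (hAct : ∀ s, (Act s).Nonempty)
    (u f : S → A → ℝ) (p : S → A → S → ℝ)
    (hp0 : ∀ s a, a ∈ Act s → ∀ s', 0 ≤ p s a s')
    (hp1 : ∀ s a, a ∈ Act s → ∑ s', p s a s' = 1)
    (δ : ℝ) (hδ0 : 0 ≤ δ) (hδ1 : δ < 1)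
    (lam : S → ℝ) (hlam : ∀ s, 0 ≤ lam s)
    (Vlam : S → ℝ)
    (hVlam : ∀ s, Vlam s = (Act s).sup' (hAct s)
      (fun a => (1 - δ) * (u s a - lam s * f s a)
        + δ * ∑ s', p s a s' * Vlam s'))
    (πstar : S → A) (hπstar : ∀ s, πstar s ∈ Act s)
    (hGreedy : ∀ s, Vlam s
      = (1 - δ) * (u s (πstar s) - lam s * f s (πstar s))
        + δ * ∑ s', p s (πstar s) s' * Vlam s')
    (hfeas : ∀ s, f s (πstar s) ≤ 0)
    (hslack : ∀ s, lam s * f s (πstar s) = 0)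
    (Vπstar : S → ℝ)
    (hVπstar : ∀ s, Vπstar s
      = (1 - δ) * u s (πstar s) + δ * ∑ s', p s (πstar s) s' * Vπstar s') :
    (∀ s, Vπstar s = Vlam s) ∧
      (∀ (π : S → A), (∀ s, π s ∈ Act s) → (∀ s, f s (π s) ≤ 0) →
        ∀ (Vπ : S → ℝ),
          (∀ s, Vπ s = (1 - δ) * u s (π s) + δ * ∑ s', p s (π s) s' * Vπ s') →
          ∀ s, Vπ s ≤ Vπstar s) :=
  no_duality_gap_state_dependent_prices_general Act hAct u f p hp0 hp1 δ hδ0 hδ1 lam hlam Vlam hVlam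
    πstar hπstar hGreedy hslack Vπstar hVπstar
end
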